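/- arXiv:2511.05721 — 6 statements merged into one kernel-verified Lean document; each statement's English description precedes it below -/
import Mathlib

section
/- Let RRB be the full subcategory of the category of semigroups (morphisms: semigroup homomorphisms) whose objects are the right regular bands, and let AP be the full subcategory of the category of partial orders (morphisms: monotone maps) whose objects are the associative posets, i.e., the posets (P,≤) for which there exists an RRB operation · on P with x ≤ y iff x·y = x. Let U : RRB → AP be the forgetful functor sending each RRB (A,·) to its underlying associative poset (A,≤) with x ≤ y iff x·y = x, and sending each semigroup homomorphism to itself regarded as a monotone map. Then U has a left adjoint. -/
/-!
The left adjoint sends an associative poset `P` to the right regular band presented by the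
generators `P` and the relations `x·y = x` for `x ≤ y`: the free semigroup on `P` modulo
idempotence, `a·b·a = b·a` and these order relations. Since `x ≤ y` in a right regular band
means `x·y = x`, a monotone map into one respects every defining relation, so it extends uniquely
to a semigroup homomorphism; restriction to the generators is the inverse bijection, and it is
visibly natural.
-/

open CategoryTheory

/-- A semigroup is a right regular band when it is idempotent and satisfies
`a·b·a = b·a`. -/
def IsRRB (S : Semigrp) : Prop :=
  (∀ x : S, x * x = x) ∧ ∀ a b : S, a * b * a = b * a

/-- The category of right regular bands: the full subcategory of the category
of semigroups whose objects are the right regular bands. -/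
abbrev RRBCat := ObjectProperty.FullSubcategory IsRRB

/-- A partial order is an associative poset when there is a right regular band
operation on it whose underlying order (`x ≤ y ↔ x·y = x`) is the given
order. -/
def IsAssocPoset (P : PartOrd) : Prop :=
  ∃ _ : Semigroup P, (∀ x : P, x * x = x) ∧ (∀ a b : P, a * b * a = b * a) ∧
    ∀ x y : P, x ≤ y ↔ x * y = x

/-- The category of associative posets: the full subcategory of the category
of partial orders whose objects are the associative posets. -/
abbrev APCat := ObjectProperty.FullSubcategory IsAssocPoset

/-- The underlying partial order of a right regular band, given by
`x ≤ y ↔ x·y = x`. -/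
def rrbOrder (S : Semigrp) (h : IsRRB S) : PartialOrder S where
  le x y := x * y = x
  le_refl x := h.1 x
  le_trans x y z hxy hyz := show x * z = x by
    calc x * z = x * y * z := by rw [hxy]
    _ = x * (y * z) := mul_assoc ..
    _ = x * y := by rw [hyz]
    _ = x := hxy
  le_antisymm x y hxy hyx :=
    calc x = x * x := (h.1 x).symm
    _ = x * y * x := by rw [hxy]
    _ = y * x := h.2 x y
    _ = y := hyx

/-- A semigroup homomorphism between right regular bands is monotone for the
underlying orders. -/
theorem mulHom_mono {S T : Semigrp} (f : S ⟶ T) (x y : ↑S) (h : x * y = x) :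
    f.hom.toFun x * f.hom.toFun y = f.hom.toFun x := by
  have := f.hom.map_mul' x y
  rw [← this, h]

/-- The forgetful functor from right regular bands to associative posets: it
sends an RRB `(A,·)` to `(A,≤)` where `x ≤ y ↔ x·y = x`, and a semigroup
homomorphism to itself, regarded as a monotone map. -/
def forgetRRBtoAP : RRBCat ⥤ APCat where
  obj S :=
    ⟨@PartOrd.of S.obj (rrbOrder S.obj S.property),
      ⟨S.obj.str, S.property.1, S.property.2, fun _ _ => Iff.rfl⟩⟩
  map {S T} f := ObjectProperty.homMk (ConcreteCategory.ofHom (C := PartOrd)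
    (@OrderHom.mk S.obj T.obj (rrbOrder S.obj S.property).toPreorder
      (rrbOrder T.obj T.property).toPreorder f.hom.hom.toFun
      (fun {x y} hxy => mulHom_mono f.hom x y hxy)))

inductive RRBRel (P : Type*) [LE P] : FreeSemigroup P → FreeSemigroup P → Prop
  | mul_self (a : FreeSemigroup P) : RRBRel P (a * a) a
  | mul_mul_self (a b : FreeSemigroup P) : RRBRel P (a * b * a) (b * a)
  | of_mul_of_of_le {x y : P} : x ≤ y → RRBRel P (.of x * .of y) (.of x)

abbrev FreeRRB (P : Type*) [LE P] : Type _ := (conGen (RRBRel P)).Quotient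

namespace FreeRRB

variable {P : Type*} [LE P]

def of (x : P) : FreeRRB P := (FreeSemigroup.of x : FreeSemigroup P)

theorem coe_eq_coe_of_rel {a b : FreeSemigroup P} (h : RRBRel P a b) :
    (a : FreeRRB P) = b :=
  (Con.eq _).2 (ConGen.Rel.of _ _ h)

theorem mul_self (a : FreeRRB P) : a * a = a :=
  Con.induction_on a fun a => coe_eq_coe_of_rel (.mul_self a)

theorem mul_mul_self (a b : FreeRRB P) : a * b * a = b * a :=
  Con.induction_on₂ a b fun a b => coe_eq_coe_of_rel (.mul_mul_self a b)

theorem of_mul_of_of_le {x y : P} (h : x ≤ y) : of x * of y = of x :=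
  coe_eq_coe_of_rel (.of_mul_of_of_le h)

theorem hom_ext {M : Type*} [Mul M] {f g : FreeRRB P →ₙ* M} (h : ∀ x, f (of x) = g (of x)) :
    f = g := by
  have : f.comp (Con.mkMulHom _) = g.comp (Con.mkMulHom _) :=
    FreeSemigroup.hom_ext (funext h)
  exact MulHom.ext fun a => Con.induction_on a (DFunLike.congr_fun this)

variable {S : Semigrp}

theorem conGen_rrbRel_le_ker_lift (hS : IsRRB S) (f : P → S)
    (hf : ∀ ⦃x y⦄, x ≤ y → f x * f y = f x) :
    conGen (RRBRel P) ≤ Con.ker (FreeSemigroup.lift f) :=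
  Con.conGen_le.2 fun a b h => by
    rw [Con.ker_rel]
    cases h with
    | mul_self a => rw [map_mul, hS.1]
    | mul_mul_self a b => simp only [map_mul, hS.2]
    | of_mul_of_of_le hxy => rw [map_mul, FreeSemigroup.lift_of, FreeSemigroup.lift_of, hf hxy]

def lift (hS : IsRRB S) :
    {f : P → S // ∀ ⦃x y⦄, x ≤ y → f x * f y = f x} ≃ (FreeRRB P →ₙ* S) where
  toFun f :=
    { toFun a := Con.liftOn a (FreeSemigroup.lift f.1) fun _ _ h =>
        conGen_rrbRel_le_ker_lift hS f.1 f.2 h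
      map_mul' a b := Con.induction_on₂ a b (FreeSemigroup.lift f.1).map_mul }
  invFun φ := ⟨fun x => φ (of x), fun _ _ h => by rw [← map_mul, of_mul_of_of_le h]⟩
  left_inv f := Subtype.ext (funext fun x => FreeSemigroup.lift_of ..)
  right_inv φ := hom_ext fun x => FreeSemigroup.lift_of ..

end FreeRRB

namespace APCat

def freeRRB (X : APCat) : RRBCat :=
  ⟨Semigrp.of (FreeRRB X.obj), FreeRRB.mul_self, FreeRRB.mul_mul_self⟩

def freeRRBHomEquiv (X : APCat) (Y : RRBCat) :
    (X.freeRRB ⟶ Y) ≃ (X ⟶ forgetRRBtoAP.obj Y) where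
  toFun φ := ObjectProperty.homMk <| PartOrd.ofHom (Y := (forgetRRBtoAP.obj Y).obj)
    ⟨_, ((FreeRRB.lift Y.property).symm φ.hom.hom).2⟩
  invFun f := ObjectProperty.homMk <| Semigrp.ofHom <|
    FreeRRB.lift Y.property ⟨f.hom.hom, f.hom.hom.monotone⟩
  left_inv φ := ObjectProperty.hom_ext _ <| Semigrp.hom_ext <|
    (FreeRRB.lift Y.property).apply_symm_apply φ.hom.hom
  right_inv f := ObjectProperty.hom_ext _ <| PartOrd.hom_ext <| OrderHom.ext _ _ <|
    congrArg Subtype.val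
      ((FreeRRB.lift Y.property).symm_apply_apply ⟨f.hom.hom, f.hom.hom.monotone⟩)

theorem freeRRBHomEquiv_comp {X : APCat} {Y Y' : RRBCat} (φ : X.freeRRB ⟶ Y) (g : Y ⟶ Y') :
    freeRRBHomEquiv X Y' (φ ≫ g) = freeRRBHomEquiv X Y φ ≫ forgetRRBtoAP.map g :=
  rfl

end APCat

/-- The forgetful functor from the category of right regular bands to the
category of associative posets has a left adjoint. -/
theorem forgetRRBtoAP_isRightAdjoint : forgetRRBtoAP.IsRightAdjoint :=
  ⟨_, ⟨Adjunction.adjunctionOfEquivLeft APCat.freeRRBHomEquiv fun _ _ _ g φ =>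
    APCat.freeRRBHomEquiv_comp φ g⟩⟩
end

section
/- For every cardinal κ there exists a right regular band A of cardinality at least κ that is subdirectly irreducible: there exist elements a ≠ b of A such that every semigroup congruence on A other than the identity congruence relates a and b. In particular, the variety of right regular bands is residually large. -/
universe u

/-!
For each `i : I` the band has a two-element right-zero class `{point i false, point i true}` and an
element `marker i` that absorbs this class from the left; every other product of a `point` falls to
the two-element bottom `{bot false, bot true}`, keeping the `Bool` of the right factor.

The pair `(bot false, bot true)` is the monolith. Multiplying a nontrivially related pair on the
left by `bot false` or by a suitable `marker i` produces either two distinct related bottom elements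
or a relation `marker i ~ bot s`; multiplying the latter on the right by `point i t` gives
`marker i ~ bot t` for both values of `t`.
-/

theorem Con.exists_rel_of_ne_bot {M : Type*} [Mul M] {c : Con M} (hc : c ≠ ⊥) :
    ∃ x y, x ≠ y ∧ c x y := by
  by_contra! h
  exact hc <| Con.ext fun x y =>
    ⟨fun hxy => by_contra fun hne => h x y hne hxy, fun hxy => hxy ▸ c.refl x⟩

inductive SIBand (I : Type u) : Type u
  | bot (s : Bool)
  | marker (i : I)
  | point (i : I) (s : Bool)

namespace SIBand

variable {I : Type u} [DecidableEq I]

instance : Mul (SIBand I) where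
  mul
    | _, bot s => bot s
    | _, marker j => marker j
    | bot _, point _ s => bot s
    | marker i, point j s => if i = j then marker i else bot s
    | point i _, point j s => if i = j then point j s else bot s

@[simp] lemma mul_bot (x : SIBand I) (s : Bool) : x * bot s = bot s := by
  cases x <;> rfl

@[simp] lemma mul_marker (x : SIBand I) (j : I) : x * marker j = marker j := by
  cases x <;> rfl

@[simp] lemma bot_mul_point (t : Bool) (j : I) (s : Bool) : bot t * point j s = bot s := rfl

lemma marker_mul_point (i j : I) (s : Bool) :
    marker i * point j s = if i = j then marker i else bot s := rfl

lemma point_mul_point (i j : I) (t s : Bool) :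
    point i t * point j s = if i = j then point j s else bot s := rfl

@[simp] lemma marker_mul_point_self (i : I) (s : Bool) : marker i * point i s = marker i := by
  simp [marker_mul_point]

lemma marker_mul_point_of_ne {i j : I} (h : i ≠ j) (s : Bool) : marker i * point j s = bot s := by
  simp [marker_mul_point, h]

instance : Semigroup (SIBand I) where
  mul_assoc x y z := by
    cases x <;> cases y <;> cases z <;> grind [mul_bot, mul_marker, bot_mul_point,
      marker_mul_point, point_mul_point]

lemma mul_self (x : SIBand I) : x * x = x := by
  cases x <;> simp [point_mul_point]

lemma right_regular (x y : SIBand I) : x * y * x = y * x := by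
  cases x <;> cases y <;> grind [mul_bot, mul_marker, bot_mul_point, marker_mul_point,
    point_mul_point]

section Congruence

variable {c : Con (SIBand I)}

lemma rel_bot_of_rel_marker_bot {i : I} {s : Bool} (h : c (marker i) (bot s)) :
    c (bot false) (bot true) := by
  have (t : Bool) : c (marker i) (bot t) := by simpa using c.mul h (c.refl (point i t))
  exact c.trans (c.symm (this false)) (this true)

lemma rel_bot_of_rel_bot_bot {s t : Bool} (hst : s ≠ t) (h : c (bot s) (bot t)) :
    c (bot false) (bot true) := by
  cases s <;> cases t <;> first | exact absurd rfl hst | exact h | exact c.symm h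

lemma rel_bot_of_rel_marker_marker {i j : I} (hij : i ≠ j) (h : c (marker i) (marker j)) :
    c (bot false) (bot true) :=
  rel_bot_of_rel_marker_bot (s := true) <| by
    simpa [marker_mul_point_of_ne hij.symm] using c.mul h (c.refl (point i true))

lemma rel_bot_of_rel_point {i : I} {t : Bool} {y : SIBand I} (hy : point i t ≠ y)
    (h : c (point i t) y) : c (bot false) (bot true) := by
  have hm := c.mul (c.refl (marker i)) h
  have hb := c.mul (c.refl (bot false)) h
  rcases y with s | j | ⟨j, s⟩
  · exact rel_bot_of_rel_marker_bot (by simpa using hm)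
  · exact rel_bot_of_rel_marker_bot (c.symm (by simpa using hb))
  · by_cases hij : i = j
    · subst hij
      exact rel_bot_of_rel_bot_bot (by simpa using hy) (by simpa using hb)
    · exact rel_bot_of_rel_marker_bot (by simpa [marker_mul_point_of_ne hij] using hm)

theorem rel_bot_of_ne_bot (hc : c ≠ ⊥) : c (bot false) (bot true) := by
  obtain ⟨x, y, hxy, h⟩ := Con.exists_rel_of_ne_bot hc
  rcases x with s | i | ⟨i, t⟩ <;> rcases y with s' | j | ⟨j, t'⟩
  · exact rel_bot_of_rel_bot_bot (by simpa using hxy) h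
  · exact rel_bot_of_rel_marker_bot (c.symm h)
  · exact rel_bot_of_rel_point hxy.symm (c.symm h)
  · exact rel_bot_of_rel_marker_bot h
  · exact rel_bot_of_rel_marker_marker (by simpa using hxy) h
  · exact rel_bot_of_rel_point hxy.symm (c.symm h)
  all_goals exact rel_bot_of_rel_point hxy h

end Congruence

end SIBand

/-- For every cardinal `κ` there is a right regular band of cardinality at least
`κ` which is subdirectly irreducible: some pair of distinct elements `a ≠ b` is
related by every semigroup congruence other than the identity congruence.
In particular, the variety of right regular bands is residually large. -/
theorem rrb_residually_large (κ : Cardinal.{u}) :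
    ∃ (A : Type u) (_ : Semigroup A),
      (∀ x : A, x * x = x) ∧ (∀ a b : A, a * b * a = b * a) ∧
      κ ≤ Cardinal.mk A ∧
      ∃ a b : A, a ≠ b ∧
        ∀ r : A → A → Prop, Equivalence r →
          (∀ x y x' y' : A, r x y → r x' y' → r (x * x') (y * y')) →
          r ≠ (fun x y : A => x = y) → r a b := by
  classical
  refine ⟨SIBand κ.out, inferInstance, SIBand.mul_self, SIBand.right_regular, ?_,
    .bot false, .bot true, by simp, fun r hr hmul hne => ?_⟩
  · calc κ = Cardinal.mk κ.out := κ.mk_out.symm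
      _ ≤ _ := Cardinal.mk_le_of_injective fun _ _ => SIBand.marker.inj
  · let c : Con (SIBand κ.out) := ⟨⟨r, hr⟩, hmul _ _ _ _⟩
    exact SIBand.rel_bot_of_ne_bot (c := c) fun h => hne (congrArg DFunLike.coe h)
end

section
/- Let X be a set with two distinguished distinct elements 0 and 1. For i ∈ X let a_i : X → X be the constant map with value i; for i ∈ X with i ∉ {0,1} let b_i : X → X be the map with b_i(i) = i and b_i(j) = 0 for j ≠ i, and let c_i : X → X be the map with c_i(i) = i and c_i(j) = 1 for j ≠ i. Let A := {a_i : i ∈ X} ∪ {b_i : i ∈ X, i ∉ {0,1}} ∪ {c_i : i ∈ X, i ∉ {0,1}}, with operation f·g := g ∘ f (composition in reverse order). Then A is closed under this operation, and (A,·) is a right regular band: the operation is associative, every element is idempotent, and f·g·f = g·f for all f, g ∈ A. -/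
/-!
Every map in the example is either a constant or a retraction `update (const X d) i i` onto
`{i, d}` with `i ∉ {0, 1}` and `d ∈ {0, 1}`. Composing two retractions `r ∘ s` gives `r` when
they fix the same point and the constant `d` of `r` otherwise, so `f ∘ g` is always `f` or a
constant. As `f ∘ f = f` and a constant absorbs anything composed on its right, this yields
`f ∘ g ∘ f = f ∘ g`, which is the right regular identity for `f · g = g ∘ f`.
-/

open Function

namespace Gerhard

variable {X : Type*} [DecidableEq X]

def maps (D : Set X) : Set (X → X) :=
  {f | (∃ c, f = const X c) ∨ ∃ i ∉ D, ∃ d ∈ D, f = update (const X d) i i}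

theorem update_const_comp_update_const {i j d e : X} (he : e ≠ i) :
    update (const X d) i i ∘ update (const X e) j j =
      if j = i then update (const X d) i i else const X d := by
  funext x
  by_cases hji : j = i <;> by_cases hx : x = j <;> simp [update_apply, hji, hx, he]

theorem update_const_comp_self {i d : X} (hd : d ≠ i) :
    update (const X d) i i ∘ update (const X d) i i = update (const X d) i i := by
  simpa using update_const_comp_update_const (j := i) hd

variable {D : Set X} {f g : X → X}

theorem comp_eq_left_or_const (hf : f ∈ maps D) (hg : g ∈ maps D) :
    f ∘ g = f ∨ ∃ c, f ∘ g = const X c := by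
  rcases hf with ⟨c, rfl⟩ | ⟨i, hi, d, -, rfl⟩
  · exact .inr ⟨c, rfl⟩
  rcases hg with ⟨c, rfl⟩ | ⟨j, -, e, he, rfl⟩
  · exact .inr ⟨_, comp_const⟩
  rw [update_const_comp_update_const (ne_of_mem_of_not_mem he hi)]
  split_ifs
  exacts [.inl rfl, .inr ⟨d, rfl⟩]

theorem comp_mem (hf : f ∈ maps D) (hg : g ∈ maps D) : f ∘ g ∈ maps D := by
  rcases comp_eq_left_or_const hf hg with h | ⟨c, h⟩ <;> rw [h]
  exacts [hf, .inl ⟨c, rfl⟩]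

theorem comp_self (hf : f ∈ maps D) : f ∘ f = f := by
  rcases hf with ⟨c, rfl⟩ | ⟨i, hi, d, hd, rfl⟩
  · rfl
  · exact update_const_comp_self (ne_of_mem_of_not_mem hd hi)

theorem comp_comp_self (hf : f ∈ maps D) (hg : g ∈ maps D) : f ∘ g ∘ f = f ∘ g := by
  rcases comp_eq_left_or_const hf hg with h | ⟨c, h⟩
  · rw [← comp_assoc, h, comp_self hf]
  · rw [← comp_assoc, h, const_comp]

end Gerhard

open Classical in
theorem gerhard_example_is_rrb_general {X : Type*} (x0 x1 : X) :
    let aMap : X → X → X := fun i _ => i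
    let bMap : X → X → X := fun i j => if j = i then i else x0
    let cMap : X → X → X := fun i j => if j = i then i else x1
    let A : Set (X → X) :=
      {f | (∃ i, f = aMap i) ∨ (∃ i, i ≠ x0 ∧ i ≠ x1 ∧ f = bMap i) ∨
        (∃ i, i ≠ x0 ∧ i ≠ x1 ∧ f = cMap i)}
    let mul : (X → X) → (X → X) → (X → X) := fun f g => g ∘ f
    (∀ f ∈ A, ∀ g ∈ A, mul f g ∈ A) ∧
    (∀ f g h : X → X, mul (mul f g) h = mul f (mul g h)) ∧
    (∀ f ∈ A, mul f f = f) ∧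
    (∀ f ∈ A, ∀ g ∈ A, mul (mul f g) f = mul g f) := by
  intro aMap bMap cMap A mul
  have hA : A = Gerhard.maps {x0, x1} := by
    have hupdate (d i : X) : update (const X d) i i = fun j => if j = i then i else d := by
      funext j
      simp [update_apply]
    ext f
    simp only [A, Gerhard.maps, hupdate, Set.mem_ofPred_eq, Set.mem_insert_iff,
      Set.mem_singleton_iff, not_or, exists_eq_or_imp, exists_eq_left, and_or_left, exists_or,
      and_assoc]
    rfl
  rw [hA]
  exact ⟨fun f hf g hg => Gerhard.comp_mem hg hf, fun _ _ _ => rfl,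
    fun f hf => Gerhard.comp_self hf, fun f hf g hg => Gerhard.comp_comp_self hf hg⟩

open Classical in
/-- The semigroup of maps from Gerhard's example: constants `a_i`, together with
`b_i` (fixing `i`, sending everything else to `0`) and `c_i` (fixing `i`,
sending everything else to `1`) for `i ∉ {0,1}`, with the operation
`f · g := g ∘ f`, is closed under the operation and forms a right regular band:
the operation is associative, every element is idempotent and `f·g·f = g·f`. -/
theorem gerhard_example_is_rrb {X : Type*} (x0 x1 : X) (h01 : x0 ≠ x1) :
    let aMap : X → X → X := fun i _ => i
    let bMap : X → X → X := fun i j => if j = i then i else x0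
    let cMap : X → X → X := fun i j => if j = i then i else x1
    let A : Set (X → X) :=
      {f | (∃ i, f = aMap i) ∨ (∃ i, i ≠ x0 ∧ i ≠ x1 ∧ f = bMap i) ∨
        (∃ i, i ≠ x0 ∧ i ≠ x1 ∧ f = cMap i)}
    let mul : (X → X) → (X → X) → (X → X) := fun f g => g ∘ f
    (∀ f ∈ A, ∀ g ∈ A, mul f g ∈ A) ∧
    (∀ f g h : X → X, mul (mul f g) h = mul f (mul g h)) ∧
    (∀ f ∈ A, mul f f = f) ∧
    (∀ f ∈ A, ∀ g ∈ A, mul (mul f g) f = mul g f) :=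
  gerhard_example_is_rrb_general x0 x1
end

section
/- Let X, the maps a_i, b_i, c_i, and the right regular band A (with operation f·g := g ∘ f) be as follows: a_i is the constant map with value i; for i ∉ {0,1}, b_i(i) = i and b_i(j) = 0 for j ≠ i, and c_i(i) = i and c_i(j) = 1 for j ≠ i; A = {a_i : i ∈ X} ∪ {b_i : i ∉ {0,1}} ∪ {c_i : i ∉ {0,1}}. Then for all i, j ∈ X with i ≠ j, the pair (a_0, a_1) belongs to the smallest semigroup congruence of A containing the pair (a_i, a_j). -/
/-!
Right multiplication by `f ∈ A` sends the pair `(a_i, a_j)` to `(a_{f i}, a_{f j})`. If one of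
`i, j`, say `k`, lies outside `{0, 1}`, then `b_k` and `c_k` turn the pair into `(a_k, a_0)` and
`(a_k, a_1)`, so `a_0 ∼ a_k ∼ a_1`; otherwise `{i, j} = {0, 1}`.
-/

open Function

section

variable {X : Type*}

open Classical in
/-- Gerhard's `b_k` and `c_k` are `fixOnly k 0` and `fixOnly k 1`. -/
noncomputable def fixOnly (k d : X) : X → X := fun y => if y = k then k else d

theorem fixOnly_self (k d : X) : fixOnly k d k = k := if_pos rfl

theorem fixOnly_of_ne {k d y : X} (h : y ≠ k) : fixOnly k d y = d := if_neg h

structure IsCongruenceOn (A : Set (X → X)) (r : (X → X) → (X → X) → Prop) : Prop where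
  refl : ∀ f ∈ A, r f f
  symm : ∀ f ∈ A, ∀ g ∈ A, r f g → r g f
  trans : ∀ f ∈ A, ∀ g ∈ A, ∀ h ∈ A, r f g → r g h → r f h
  comp : ∀ f ∈ A, ∀ g ∈ A, ∀ f' ∈ A, ∀ g' ∈ A, r f g → r f' g' → r (f' ∘ f) (g' ∘ g)

namespace IsCongruenceOn

variable {A : Set (X → X)} {r : (X → X) → (X → X) → Prop}

theorem const_apply (hr : IsCongruenceOn A r) {i j : X} (hi : const X i ∈ A)
    (hj : const X j ∈ A) (h : r (const X i) (const X j)) {f : X → X} (hf : f ∈ A) :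
    r (const X (f i)) (const X (f j)) :=
  hr.comp _ hi _ hj _ hf _ hf h (hr.refl f hf)

theorem rel_const_of_fixOnly_mem (hr : IsCongruenceOn A r) (hconst : ∀ x, const X x ∈ A)
    {x0 x1 k m : X} (hk0 : fixOnly k x0 ∈ A) (hk1 : fixOnly k x1 ∈ A) (hkm : k ≠ m)
    (h : r (const X k) (const X m)) : r (const X x0) (const X x1) := by
  have hkx0 : r (const X k) (const X x0) := by
    simpa only [fixOnly_self, fixOnly_of_ne hkm.symm] using
      hr.const_apply (hconst k) (hconst m) h hk0
  have hkx1 : r (const X k) (const X x1) := by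
    simpa only [fixOnly_self, fixOnly_of_ne hkm.symm] using
      hr.const_apply (hconst k) (hconst m) h hk1
  exact hr.trans _ (hconst x0) _ (hconst k) _ (hconst x1)
    (hr.symm _ (hconst k) _ (hconst x0) hkx0) hkx1

end IsCongruenceOn

end

open Classical in
theorem gerhard_theta_a0_a1_general {X : Type*} (x0 x1 : X)
    (i j : X) (hij : i ≠ j) :
    let aMap : X → X → X := fun i _ => i
    let bMap : X → X → X := fun i j => if j = i then i else x0
    let cMap : X → X → X := fun i j => if j = i then i else x1
    let A : Set (X → X) :=
      {f | (∃ i, f = aMap i) ∨ (∃ i, i ≠ x0 ∧ i ≠ x1 ∧ f = bMap i) ∨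
        (∃ i, i ≠ x0 ∧ i ≠ x1 ∧ f = cMap i)}
    let mul : (X → X) → (X → X) → (X → X) := fun f g => g ∘ f
    ∀ r : (X → X) → (X → X) → Prop,
      (∀ f ∈ A, r f f) →
      (∀ f ∈ A, ∀ g ∈ A, r f g → r g f) →
      (∀ f ∈ A, ∀ g ∈ A, ∀ h ∈ A, r f g → r g h → r f h) →
      (∀ f ∈ A, ∀ g ∈ A, ∀ f' ∈ A, ∀ g' ∈ A,
        r f g → r f' g' → r (mul f f') (mul g g')) →
      r (aMap i) (aMap j) → r (aMap x0) (aMap x1) := by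
  intro aMap bMap cMap A mul r hrefl hsymm htrans hmul hr
  have hcong : IsCongruenceOn A r := ⟨hrefl, hsymm, htrans, hmul⟩
  have hconst : ∀ x, const X x ∈ A := fun x => Or.inl ⟨x, rfl⟩
  have hfix : ∀ k, k ≠ x0 → k ≠ x1 → fixOnly k x0 ∈ A ∧ fixOnly k x1 ∈ A :=
    fun k h0 h1 => ⟨Or.inr (Or.inl ⟨k, h0, h1, rfl⟩), Or.inr (Or.inr ⟨k, h0, h1, rfl⟩)⟩
  by_cases hi : i ≠ x0 ∧ i ≠ x1
  · exact hcong.rel_const_of_fixOnly_mem hconst (hfix i hi.1 hi.2).1 (hfix i hi.1 hi.2).2 hij hr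
  by_cases hj : j ≠ x0 ∧ j ≠ x1
  · exact hcong.rel_const_of_fixOnly_mem hconst (hfix j hj.1 hj.2).1 (hfix j hj.1 hj.2).2
      hij.symm (hsymm _ (hconst i) _ (hconst j) hr)
  obtain rfl | rfl : i = x0 ∨ i = x1 := by tauto
  · obtain rfl : j = x1 := by tauto
    exact hr
  · obtain rfl : j = x0 := by tauto
    exact hsymm _ (hconst _) _ (hconst _) hr

open Classical in
/-- In Gerhard's right regular band `A` of maps (constants `a_i`, and `b_i`,
`c_i` for `i ∉ {0,1}`, with `f·g := g ∘ f`), for any `i ≠ j` the pair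
`(a_0, a_1)` belongs to the smallest semigroup congruence of `A` containing
`(a_i, a_j)`: every congruence of `A` relating `a_i` and `a_j` also relates
`a_0` and `a_1`. -/
theorem gerhard_theta_a0_a1 {X : Type*} (x0 x1 : X) (h01 : x0 ≠ x1)
    (i j : X) (hij : i ≠ j) :
    let aMap : X → X → X := fun i _ => i
    let bMap : X → X → X := fun i j => if j = i then i else x0
    let cMap : X → X → X := fun i j => if j = i then i else x1
    let A : Set (X → X) :=
      {f | (∃ i, f = aMap i) ∨ (∃ i, i ≠ x0 ∧ i ≠ x1 ∧ f = bMap i) ∨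
        (∃ i, i ≠ x0 ∧ i ≠ x1 ∧ f = cMap i)}
    let mul : (X → X) → (X → X) → (X → X) := fun f g => g ∘ f
    ∀ r : (X → X) → (X → X) → Prop,
      (∀ f ∈ A, r f f) →
      (∀ f ∈ A, ∀ g ∈ A, r f g → r g f) →
      (∀ f ∈ A, ∀ g ∈ A, ∀ h ∈ A, r f g → r g h → r f h) →
      (∀ f ∈ A, ∀ g ∈ A, ∀ f' ∈ A, ∀ g' ∈ A,
        r f g → r f' g' → r (mul f f') (mul g g')) →
      r (aMap i) (aMap j) → r (aMap x0) (aMap x1) :=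
  gerhard_theta_a0_a1_general x0 x1 i j hij
end

section
/- Let A be a right regular band, c ∈ A a central element, and I1, I2 subsemigroups of A with A = I1 ×_c I2. If x1 ∈ I1, x2 ∈ I2 and both x = ⟨⟨x1,x2⟩⟩_c and x' = ⟨⟨x1,x2⟩⟩_c, then x = x'. -/
namespace RRBFactor

variable {A : Type*} [Semigroup A]

/-- The underlying order of a right regular band: `x ≤ y ↔ x·y = x`. -/
def rle (x y : A) : Prop := x * y = x

/-- `s` is the least upper bound of `{a, b}` with respect to the underlying
order of a right regular band. -/
def IsLub2 (a b s : A) : Prop :=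
  rle a s ∧ rle b s ∧ ∀ t : A, rle a t → rle b t → rle s t

/-- `IsPair c x1 x2 x` expresses `x = ⟨⟨x1,x2⟩⟩_c`: the conjunction of
(comm), (dist), (p1), (p2) and (prod). -/
def IsPair (c x1 x2 x : A) : Prop :=
  (x * x1 = x1 * x ∧ x * x2 = x2 * x) ∧
  IsLub2 (x * x1) (x * x2) x ∧
  IsLub2 (x * x1) (c * x1) x1 ∧
  IsLub2 (x * x2) (c * x2) x2 ∧
  x1 * x2 = x * c

/-- A subset is a subsemigroup when it is closed under multiplication. -/
def MulClosed (I : Set A) : Prop := ∀ a ∈ I, ∀ b ∈ I, a * b ∈ I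

/-- `CDirect c I1 I2` expresses `A = I1 ×_c I2`: the conjunction of (Perm),
(Mod1), (Mod2), (Abs) (in both symmetric forms), (Exi) and (Onto). -/
def CDirect (c : A) (I1 I2 : Set A) : Prop :=
  -- (Perm)
  (∀ x1 ∈ I1, ∀ x2 ∈ I2, x1 * x2 = x2 * x1) ∧
  -- (Mod1)
  (∀ x y : A, ∀ x1 ∈ I1, ∀ x2 ∈ I2, rle (x * c) (x1 * x2) →
    ∀ s : A, IsLub2 (x * x1) (x * x2) s →
      IsLub2 (x * x1 * y) (x * x2 * y) (s * y) ∧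
      IsLub2 (y * x * x1) (y * x * x2) (y * s)) ∧
  -- (Mod2)
  (∀ x y : A, ∀ x1 ∈ I1, ∀ x2 ∈ I2, rle (x1 * x2) x →
    (∀ s : A, IsLub2 (x * x1) (c * x1) s →
      IsLub2 (x * x1 * y) (c * x1 * y) (s * y) ∧
      IsLub2 (y * x * x1) (y * c * x1) (y * s)) ∧
    (∀ s : A, IsLub2 (x * x2) (c * x2) s →
      IsLub2 (x * x2 * y) (c * x2 * y) (s * y) ∧
      IsLub2 (y * x * x2) (y * c * x2) (y * s))) ∧
  -- (Abs)
  (∀ x1 ∈ I1, ∀ y1 ∈ I1, ∀ z2 ∈ I2, ∀ s : A,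
      (IsLub2 x1 (y1 * z2) s ↔ IsLub2 x1 (y1 * c) s)) ∧
  (∀ x2 ∈ I2, ∀ y2 ∈ I2, ∀ z1 ∈ I1, ∀ s : A,
      (IsLub2 x2 (y2 * z1) s ↔ IsLub2 x2 (y2 * c) s)) ∧
  -- (Exi)
  (∀ x1 ∈ I1, ∀ x2 ∈ I2, ∃ x : A, IsPair c x1 x2 x) ∧
  -- (Onto)
  (∀ x : A, ∃ x1 ∈ I1, ∃ x2 ∈ I2, IsPair c x1 x2 x)

end RRBFactor

/-!
Two elements `x, x'` with `x = ⟨⟨x1,x2⟩⟩_c = x'` agree after multiplication by `c`, so both lie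
above `x1·x2`. Then (Mod2), applied to the join `x1 = x'·x1 ∨ c·x1` multiplied on the left by `x`,
shows that `x·x1` is the join of two elements below `x'`; the same holds for `x·x2`, so
`x = x·x1 ∨ x·x2 ≤ x'` by (dist). By symmetry `x' ≤ x`, and the underlying order is antisymmetric.
-/

namespace RRBFactor

variable {A : Type*} [Semigroup A]

theorem rle_antisymm (idem : ∀ x : A, x * x = x) (rrb : ∀ a b : A, a * b * a = b * a)
    {x y : A} (hxy : rle x y) (hyx : rle y x) : x = y :=
  calc x = x * y * x := by rw [hxy, idem]
    _ = y * x := rrb x y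
    _ = y := hyx

theorem rle_mul_central (rrb : ∀ a b : A, a * b * a = b * a) {c : A}
    (hc : ∀ x : A, c * x = x * c) (z : A) : rle (z * c) z := by
  show z * c * z = z * c
  rw [rrb, hc]

theorem IsPair.mul_central_eq {c x1 x2 x x' : A} (h : IsPair c x1 x2 x)
    (h' : IsPair c x1 x2 x') : x * c = x' * c :=
  h.2.2.2.2.symm.trans h'.2.2.2.2

theorem rle_of_isLub2_of_mul_central_eq (idem : ∀ x : A, x * x = x)
    (rrb : ∀ a b : A, a * b * a = b * a) {c : A} (hc : ∀ x : A, c * x = x * c)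
    {x x' xi s : A} (hxc : x * c = x' * c) (hx' : x' * xi = xi * x')
    (hs : IsLub2 (x * x' * xi) (x * c * xi) s) : rle s x' := by
  refine hs.2.2 x' ?_ ?_
  · show x * x' * xi * x' = x * x' * xi
    rw [mul_assoc (x * x'), ← hx', ← mul_assoc, mul_assoc x x', idem]
  · show x * c * xi * x' = x * c * xi
    calc x * c * xi * x' = x * (c * x') * xi := by simp only [mul_assoc, hx']
      _ = x * (c * x) * xi := by rw [hc x', ← hxc, ← hc]
      _ = c * x * xi := by rw [← mul_assoc, rrb]
      _ = x * c * xi := by rw [hc]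

theorem CDirect.rle_of_isPair (idem : ∀ x : A, x * x = x) (rrb : ∀ a b : A, a * b * a = b * a)
    {c : A} (hc : ∀ x : A, c * x = x * c) {I1 I2 : Set A} (hdp : CDirect c I1 I2)
    {x1 x2 x x' : A} (hx1 : x1 ∈ I1) (hx2 : x2 ∈ I2)
    (h : IsPair c x1 x2 x) (h' : IsPair c x1 x2 x') : rle x x' := by
  have hxc := h.mul_central_eq h'
  have hdist := h.2.1
  obtain ⟨⟨hc1', hc2'⟩, -, hp1', hp2', hprod'⟩ := h'
  have hle : rle (x1 * x2) x' := hprod' ▸ rle_mul_central rrb hc x'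
  obtain ⟨H1, H2⟩ := hdp.2.2.1 x' x x1 hx1 x2 hx2 hle
  exact hdist.2.2 x'
    (rle_of_isLub2_of_mul_central_eq idem rrb hc hxc hc1' (H1 x1 hp1').2)
    (rle_of_isLub2_of_mul_central_eq idem rrb hc hxc hc2' (H2 x2 hp2').2)

end RRBFactor

open RRBFactor

theorem rrb_pair_unique_general {A : Type*} [Semigroup A]
    (idem : ∀ x : A, x * x = x) (rrb : ∀ a b : A, a * b * a = b * a)
    (c : A) (hc : ∀ x : A, c * x = x * c)
    (I1 I2 : Set A)
    (hdp : CDirect c I1 I2)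
    (x1 x2 x x' : A) (hx1 : x1 ∈ I1) (hx2 : x2 ∈ I2)
    (h : IsPair c x1 x2 x) (h' : IsPair c x1 x2 x') :
    x = x' :=
  rle_antisymm idem rrb (hdp.rle_of_isPair idem rrb hc hx1 hx2 h h')
    (hdp.rle_of_isPair idem rrb hc hx1 hx2 h' h)

/-- If `A = I1 ×_c I2` for a central element `c` of a right regular band `A`,
then for `x1 ∈ I1`, `x2 ∈ I2`, the element `x` with `x = ⟨⟨x1,x2⟩⟩_c` is
unique. -/
theorem rrb_pair_unique {A : Type*} [Semigroup A]
    (idem : ∀ x : A, x * x = x) (rrb : ∀ a b : A, a * b * a = b * a)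
    (c : A) (hc : ∀ x : A, c * x = x * c)
    (I1 I2 : Set A) (hI1 : MulClosed I1) (hI2 : MulClosed I2)
    (hdp : CDirect c I1 I2)
    (x1 x2 x x' : A) (hx1 : x1 ∈ I1) (hx2 : x2 ∈ I2)
    (h : IsPair c x1 x2 x) (h' : IsPair c x1 x2 x') :
    x = x' :=
  rrb_pair_unique_general idem rrb c hc I1 I2 hdp x1 x2 x x' hx1 hx2 h h'
end

section
/- Let A be a right regular band, c ∈ A a central element, and I1, I2 subsemigroups of A with A = I1 ×_c I2. If x ∈ A satisfies x = ⟨⟨x1,x2⟩⟩_c and x = ⟨⟨y1,y2⟩⟩_c with x1, y1 ∈ I1 and x2, y2 ∈ I2, then x1 = y1 and x2 = y2. -/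
/-!
Both coordinates of `x` are recovered from the underlying order. Since `x1` is the join of
`x·x1` and `c·x1`, it suffices to show `x·x1 ≤ y1` and `c·x1 ≤ y1`. (Abs) lets `c` stand in for
any factor from the other subsemigroup, which gives `c·x1 ≤ y1` and the cross products
`x1·y2 = x·c`; (Mod1), applied to `x = x·y1 ∨ x·y2` and multiplied by `x1`, then reduces
`x1·x ≤ y1` to `x1·x·y2 = x·c ≤ y1`. Exchanging the pairs gives `y1 ≤ x1`, and since
`I1 ×_c I2 = I2 ×_c I1` the same argument applies to the second coordinates.
-/

namespace RRBFactor

variable {A : Type*} [Semigroup A]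

theorem rle_antisymm_s13 (rrb : ∀ a b : A, a * b * a = b * a) {a b : A}
    (hab : rle a b) (hba : rle b a) : a = b :=
  calc a = a * (b * a) := by rw [hba, hab]
    _ = b := by rw [← mul_assoc, rrb, hba]

theorem IsLub2.symm {a b s : A} (h : IsLub2 a b s) : IsLub2 b a s :=
  ⟨h.2.1, h.1, fun t hb ha => h.2.2 t ha hb⟩

theorem isLub2_self_iff (idem : ∀ x : A, x * x = x) {a b : A} :
    IsLub2 a b a ↔ rle b a :=
  ⟨fun h => h.2.1, fun h => ⟨idem a, h, fun _ ha _ => ha⟩⟩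

theorem mul_mul_central_of_commute {c : A} (hc : ∀ y : A, c * y = y * c) {x z : A}
    (hxz : x * z = z * x) (h : rle (x * c) z) : z * (x * c) = x * c := by
  rw [← mul_assoc, ← hxz, mul_assoc, ← hc z, ← mul_assoc]
  exact h

section Pair

variable {c x x1 x2 : A}

theorem IsPair.swap (hperm : x1 * x2 = x2 * x1) (h : IsPair c x1 x2 x) :
    IsPair c x2 x1 x :=
  ⟨h.1.symm, h.2.1.symm, h.2.2.2.1, h.2.2.1, hperm.symm.trans h.2.2.2.2⟩

theorem IsPair.rle_snd (idem : ∀ x : A, x * x = x) (h : IsPair c x1 x2 x) :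
    rle (x * c) x2 := by
  rw [rle, ← h.2.2.2.2, mul_assoc, idem]

theorem IsPair.rle_fst (idem : ∀ x : A, x * x = x) (hperm : x1 * x2 = x2 * x1)
    (h : IsPair c x1 x2 x) : rle (x * c) x1 :=
  (h.swap hperm).rle_snd idem

end Pair

namespace CDirect

variable {c : A} {I1 I2 : Set A} {x x1 x2 y1 y2 : A}

theorem isPair_swap (hdp : CDirect c I1 I2) (hx1 : x1 ∈ I1) (hx2 : x2 ∈ I2)
    (h : IsPair c x1 x2 x) : IsPair c x2 x1 x :=
  h.swap (hdp.1 x1 hx1 x2 hx2)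

protected theorem symm (hdp : CDirect c I1 I2) : CDirect c I2 I1 := by
  obtain ⟨perm, mod1, mod2, abs1, abs2, exi, onto⟩ := hdp
  refine ⟨fun x2 hx2 x1 hx1 => (perm x1 hx1 x2 hx2).symm, ?_, ?_, abs2, abs1, ?_, ?_⟩
  · intro x y x2 hx2 x1 hx1 hle s hs
    rw [← perm x1 hx1 x2 hx2] at hle
    obtain ⟨hright, hleft⟩ := mod1 x y x1 hx1 x2 hx2 hle s hs.symm
    exact ⟨hright.symm, hleft.symm⟩
  · intro x y x2 hx2 x1 hx1 hle
    rw [← perm x1 hx1 x2 hx2] at hle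
    exact (mod2 x y x1 hx1 x2 hx2 hle).symm
  · intro x2 hx2 x1 hx1
    obtain ⟨x, hx⟩ := exi x1 hx1 x2 hx2
    exact ⟨x, hx.swap (perm x1 hx1 x2 hx2)⟩
  · intro x
    obtain ⟨x1, hx1, x2, hx2, hx⟩ := onto x
    exact ⟨x2, hx2, x1, hx1, hx.swap (perm x1 hx1 x2 hx2)⟩

theorem rle_mul_iff (idem : ∀ x : A, x * x = x) (hdp : CDirect c I1 I2) {w y z : A}
    (hw : w ∈ I1) (hy : y ∈ I1) (hz : z ∈ I2) : rle (y * z) w ↔ rle (y * c) w := by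
  rw [← isLub2_self_iff idem, ← isLub2_self_iff idem]
  exact hdp.2.2.2.1 w hw y hy z hz w

theorem isLub2_mul_pair (idem : ∀ x : A, x * x = x) (hdp : CDirect c I1 I2)
    (hy1 : y1 ∈ I1) (hy2 : y2 ∈ I2) (h : IsPair c y1 y2 x) (z : A) :
    IsLub2 (z * x * y1) (z * x * y2) (z * x) :=
  (hdp.2.1 x z y1 hy1 y2 hy2 (by rw [rle, h.2.2.2.2]; exact idem _) x h.2.1).2

theorem mul_eq_of_isPair (idem : ∀ x : A, x * x = x) (hc : ∀ y : A, c * y = y * c)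
    (hdp : CDirect c I1 I2) (hx1 : x1 ∈ I1) (hx2 : x2 ∈ I2) (hy1 : y1 ∈ I1) (hy2 : y2 ∈ I2)
    (h : IsPair c x1 x2 x) (h' : IsPair c y1 y2 x) : x1 * y2 = x * c := by
  have hy2y1 : rle (y2 * y1) x2 := by
    rw [← hdp.1 y1 hy1 y2 hy2, h'.2.2.2.2]
    exact h.rle_snd idem
  have hy2x1 : rle (y2 * x1) x2 :=
    (hdp.symm.rle_mul_iff idem hx2 hy2 hx1).2 ((hdp.symm.rle_mul_iff idem hx2 hy2 hy1).1 hy2y1)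
  calc x1 * y2 = y2 * x1 * x2 := by rw [hdp.1 x1 hx1 y2 hy2, hy2x1]
    _ = y2 * (x * c) := by rw [mul_assoc, h.2.2.2.2]
    _ = x * c := mul_mul_central_of_commute hc h'.1.2 (h'.rle_snd idem)

theorem rle_fst_of_isPair (idem : ∀ x : A, x * x = x) (hc : ∀ y : A, c * y = y * c)
    (hdp : CDirect c I1 I2) (hx1 : x1 ∈ I1) (hx2 : x2 ∈ I2) (hy1 : y1 ∈ I1) (hy2 : y2 ∈ I2)
    (h : IsPair c x1 x2 x) (h' : IsPair c y1 y2 x) : rle x1 y1 := by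
  have hpy1 : rle (x * c) y1 := h'.rle_fst idem (hdp.1 y1 hy1 y2 hy2)
  have hx1xy2 : x1 * x * y2 = x * c := by
    rw [← h.1.1, mul_assoc, hdp.mul_eq_of_isPair idem hc hx1 hx2 hy1 hy2 h h', ← mul_assoc,
      idem]
  have hxx1 : rle (x * x1) y1 := by
    rw [h.1.1]
    exact (hdp.isLub2_mul_pair idem hy1 hy2 h' x1).2.2 y1 (by rw [rle, mul_assoc, idem])
      (by rw [rle, hx1xy2]; exact hpy1)
  have hcx1 : rle (c * x1) y1 := by
    rw [hc, ← hdp.rle_mul_iff idem hy1 hx1 hx2, rle, h.2.2.2.2]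
    exact hpy1
  exact h.2.2.1.2.2 y1 hxx1 hcx1

end CDirect

end RRBFactor

open RRBFactor

theorem rrb_pair_coords_unique_general {A : Type*} [Semigroup A]
    (idem : ∀ x : A, x * x = x) (rrb : ∀ a b : A, a * b * a = b * a)
    (c : A) (hc : ∀ x : A, c * x = x * c)
    (I1 I2 : Set A)
    (hdp : CDirect c I1 I2)
    (x x1 x2 y1 y2 : A) (hx1 : x1 ∈ I1) (hy1 : y1 ∈ I1)
    (hx2 : x2 ∈ I2) (hy2 : y2 ∈ I2)
    (h : IsPair c x1 x2 x) (h' : IsPair c y1 y2 x) :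
    x1 = y1 ∧ x2 = y2 := by
  have hdp' := hdp.symm
  have hswap := hdp.isPair_swap hx1 hx2 h
  have hswap' := hdp.isPair_swap hy1 hy2 h'
  exact ⟨rle_antisymm_s13 rrb (hdp.rle_fst_of_isPair idem hc hx1 hx2 hy1 hy2 h h')
      (hdp.rle_fst_of_isPair idem hc hy1 hy2 hx1 hx2 h' h),
    rle_antisymm_s13 rrb (hdp'.rle_fst_of_isPair idem hc hx2 hx1 hy2 hy1 hswap hswap')
      (hdp'.rle_fst_of_isPair idem hc hy2 hy1 hx2 hx1 hswap' hswap)⟩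

/-- If `A = I1 ×_c I2` for a central element `c` of a right regular band `A`,
and `x = ⟨⟨x1,x2⟩⟩_c = ⟨⟨y1,y2⟩⟩_c` with `x1, y1 ∈ I1` and `x2, y2 ∈ I2`, then
`x1 = y1` and `x2 = y2`. -/
theorem rrb_pair_coords_unique {A : Type*} [Semigroup A]
    (idem : ∀ x : A, x * x = x) (rrb : ∀ a b : A, a * b * a = b * a)
    (c : A) (hc : ∀ x : A, c * x = x * c)
    (I1 I2 : Set A) (hI1 : MulClosed I1) (hI2 : MulClosed I2)
    (hdp : CDirect c I1 I2)
    (x x1 x2 y1 y2 : A) (hx1 : x1 ∈ I1) (hy1 : y1 ∈ I1)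
    (hx2 : x2 ∈ I2) (hy2 : y2 ∈ I2)
    (h : IsPair c x1 x2 x) (h' : IsPair c y1 y2 x) :
    x1 = y1 ∧ x2 = y2 :=
  rrb_pair_coords_unique_general idem rrb c hc I1 I2 hdp x x1 x2 y1 y2 hx1 hy1 hx2 hy2 h h'
end
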